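/- If a derivation D in the natural deduction system nC has open assumptions Γ and end-formula β, then the sequent Γ ⇒ β is provable in the sequent calculus sC (with cut). -/

import Mathlib

inductive Fm : Type
  | var : ℕ → Fm
  | conj : Fm → Fm → Fm
  | disj : Fm → Fm → Fm
  | impl : Fm → Fm → Fm
  | neg : Fm → Fm
  deriving DecidableEq

open Fm

/-- Optional rules: cut, (ex-middle), (Peirce), (g-ex-middle), (at-ex-middle). -/
structure Rules where
  cut : Bool := false
  exMid : Bool := false
  peirce : Bool := false
  gem : Bool := false
  atEx : Bool := false

/-- The sequent calculus sC for Wansing's connexive logic C, with optional extra rules. -/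
inductive SC (R : Rules) : Finset Fm → Fm → Prop
  | init1 (p : ℕ) (Γ : Finset Fm) : SC R (insert (var p) Γ) (var p)
  | init2 (p : ℕ) (Γ : Finset Fm) : SC R (insert (neg (var p)) Γ) (neg (var p))
  | cut {Γ Δ : Finset Fm} {a c : Fm} : R.cut = true →
      SC R Γ a → SC R (insert a Δ) c → SC R (Γ ∪ Δ) c
  | implL {Γ Δ : Finset Fm} {a b c : Fm} :
      SC R Γ a → SC R (insert b Δ) c → SC R (insert (impl a b) (Γ ∪ Δ)) c
  | implR {Γ : Finset Fm} {a b : Fm} :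
      SC R (insert a Γ) b → SC R Γ (impl a b)
  | conjL {Γ : Finset Fm} {a b c : Fm} :
      SC R (insert a (insert b Γ)) c → SC R (insert (conj a b) Γ) c
  | conjR {Γ : Finset Fm} {a b : Fm} :
      SC R Γ a → SC R Γ b → SC R Γ (conj a b)
  | disjL {Γ : Finset Fm} {a b c : Fm} :
      SC R (insert a Γ) c → SC R (insert b Γ) c → SC R (insert (disj a b) Γ) c
  | disjR1 {Γ : Finset Fm} {a b : Fm} : SC R Γ a → SC R Γ (disj a b)
  | disjR2 {Γ : Finset Fm} {a b : Fm} : SC R Γ b → SC R Γ (disj a b)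
  | negnegL {Γ : Finset Fm} {a c : Fm} :
      SC R (insert a Γ) c → SC R (insert (neg (neg a)) Γ) c
  | negnegR {Γ : Finset Fm} {a : Fm} : SC R Γ a → SC R Γ (neg (neg a))
  | negimplL {Γ Δ : Finset Fm} {a b c : Fm} :
      SC R Γ a → SC R (insert (neg b) Δ) c → SC R (insert (neg (impl a b)) (Γ ∪ Δ)) c
  | negimplR {Γ : Finset Fm} {a b : Fm} :
      SC R (insert a Γ) (neg b) → SC R Γ (neg (impl a b))
  | negconjL {Γ : Finset Fm} {a b c : Fm} :
      SC R (insert (neg a) Γ) c → SC R (insert (neg b) Γ) c →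
      SC R (insert (neg (conj a b)) Γ) c
  | negconjR1 {Γ : Finset Fm} {a b : Fm} : SC R Γ (neg a) → SC R Γ (neg (conj a b))
  | negconjR2 {Γ : Finset Fm} {a b : Fm} : SC R Γ (neg b) → SC R Γ (neg (conj a b))
  | negdisjL {Γ : Finset Fm} {a b c : Fm} :
      SC R (insert (neg a) (insert (neg b) Γ)) c → SC R (insert (neg (disj a b)) Γ) c
  | negdisjR {Γ : Finset Fm} {a b : Fm} :
      SC R Γ (neg a) → SC R Γ (neg b) → SC R Γ (neg (disj a b))
  | exMid {Γ : Finset Fm} {a c : Fm} : R.exMid = true →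
      SC R (insert (neg a) Γ) c → SC R (insert a Γ) c → SC R Γ c
  | peirce {Γ : Finset Fm} {a b : Fm} : R.peirce = true →
      SC R (insert (impl a b) Γ) a → SC R Γ a
  | gem {Γ : Finset Fm} {a b c : Fm} : R.gem = true →
      SC R (insert (impl a b) Γ) c → SC R (insert a Γ) c → SC R Γ c
  | atEx {Γ : Finset Fm} {p : ℕ} {c : Fm} : R.atEx = true →
      SC R (insert (neg (var p)) Γ) c → SC R (insert (var p) Γ) c → SC R Γ c

/-- sC (with cut). -/
def sC : Rules := { cut := true }
/-- cut-free sC. -/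
def sCcf : Rules := {}
/-- sC3 = sC + (ex-middle). -/
def sC3 : Rules := { cut := true, exMid := true }
/-- sMC = sC + (Peirce). -/
def sMC : Rules := { cut := true, peirce := true }
/-- sMC* = sC + (g-ex-middle). -/
def sMCstar : Rules := { cut := true, gem := true }

/-- The natural deduction system nC: NC Γ β means there is a derivation in nC with
open assumptions exactly Γ and end-formula β. -/
inductive NC : Finset Fm → Fm → Prop
  | ass (a : Fm) : NC {a} a
  | impI (a : Fm) {Γ : Finset Fm} {b : Fm} : NC Γ b → NC (Γ.erase a) (impl a b)
  | impE {Γ Δ : Finset Fm} {a b : Fm} : NC Γ (impl a b) → NC Δ a → NC (Γ ∪ Δ) b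
  | conjI {Γ Δ : Finset Fm} {a b : Fm} : NC Γ a → NC Δ b → NC (Γ ∪ Δ) (conj a b)
  | conjE1 {Γ : Finset Fm} {a b : Fm} : NC Γ (conj a b) → NC Γ a
  | conjE2 {Γ : Finset Fm} {a b : Fm} : NC Γ (conj a b) → NC Γ b
  | disjI1 {Γ : Finset Fm} {a b : Fm} : NC Γ a → NC Γ (disj a b)
  | disjI2 {Γ : Finset Fm} {a b : Fm} : NC Γ b → NC Γ (disj a b)
  | disjE {Γ Δ Θ : Finset Fm} {a b c : Fm} :
      NC Γ (disj a b) → NC Δ c → NC Θ c → NC ((Γ ∪ Δ.erase a) ∪ Θ.erase b) c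
  | negnegI {Γ : Finset Fm} {a : Fm} : NC Γ a → NC Γ (neg (neg a))
  | negnegE {Γ : Finset Fm} {a : Fm} : NC Γ (neg (neg a)) → NC Γ a
  | negimpI (a : Fm) {Γ : Finset Fm} {b : Fm} :
      NC Γ (neg b) → NC (Γ.erase a) (neg (impl a b))
  | negimpE {Γ Δ : Finset Fm} {a b : Fm} :
      NC Γ (neg (impl a b)) → NC Δ a → NC (Γ ∪ Δ) (neg b)
  | negconjI1 {Γ : Finset Fm} {a b : Fm} : NC Γ (neg a) → NC Γ (neg (conj a b))
  | negconjI2 {Γ : Finset Fm} {a b : Fm} : NC Γ (neg b) → NC Γ (neg (conj a b))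
  | negconjE {Γ Δ Θ : Finset Fm} {a b c : Fm} :
      NC Γ (neg (conj a b)) → NC Δ c → NC Θ c →
      NC ((Γ ∪ Δ.erase (neg a)) ∪ Θ.erase (neg b)) c
  | negdisjI {Γ Δ : Finset Fm} {a b : Fm} :
      NC Γ (neg a) → NC Δ (neg b) → NC (Γ ∪ Δ) (neg (disj a b))
  | negdisjE1 {Γ : Finset Fm} {a b : Fm} : NC Γ (neg (disj a b)) → NC Γ (neg a)
  | negdisjE2 {Γ : Finset Fm} {a b : Fm} : NC Γ (neg (disj a b)) → NC Γ (neg b)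

/-!
Every rule of nC is simulated in sC. Introduction rules are right rules; an elimination rule
is a cut of its major premise against the matching left rule, whose remaining premises are the
minor premises or initial sequents; discharged assumptions are restored by weakening. Initial
sequents `a, Γ ⇒ a` for compound `a` are derivable by induction on `a`.
-/

namespace SC

variable {R : Rules}

theorem of_insert_of_mem {Γ : Finset Fm} {a c : Fm} (ha : a ∈ Γ) (h : SC R (insert a Γ) c) :
    SC R Γ c := by
  rwa [Finset.insert_eq_of_mem ha] at h

theorem cut' (hcut : R.cut = true) {Γ : Finset Fm} {a c : Fm} (h₁ : SC R Γ a)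
    (h₂ : SC R (insert a Γ) c) : SC R Γ c := by
  simpa using cut hcut h₁ h₂

theorem implL' {Γ : Finset Fm} {a b c : Fm} (h₁ : SC R Γ a) (h₂ : SC R (insert b Γ) c) :
    SC R (insert (impl a b) Γ) c := by
  simpa using implL h₁ h₂

theorem negimplL' {Γ : Finset Fm} {a b c : Fm} (h₁ : SC R Γ a)
    (h₂ : SC R (insert (neg b) Γ) c) : SC R (insert (neg (impl a b)) Γ) c := by
  simpa using negimplL h₁ h₂

theorem mono {Γ Δ : Finset Fm} {c : Fm} (h : SC R Γ c) (hΓΔ : Γ ⊆ Δ) : SC R Δ c := by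
  induction h generalizing Δ with
  | init1 p => exact of_insert_of_mem (hΓΔ (by simp)) (init1 p Δ)
  | init2 p => exact of_insert_of_mem (hΓΔ (by simp)) (init2 p Δ)
  | cut hcut _ _ ih₁ ih₂ =>
    obtain ⟨hΓ, hΔ⟩ := Finset.union_subset_iff.1 hΓΔ
    exact cut' hcut (ih₁ hΓ) (ih₂ (by gcongr))
  | implL _ _ ih₁ ih₂ =>
    obtain ⟨hx, hΓ, hΔ⟩ :=
      (Finset.insert_subset_iff.1 hΓΔ).imp_right Finset.union_subset_iff.1
    exact of_insert_of_mem hx (implL' (ih₁ hΓ) (ih₂ (by gcongr)))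
  | implR _ ih => exact implR (ih (by gcongr))
  | conjL _ ih =>
    obtain ⟨hx, hΓ⟩ := Finset.insert_subset_iff.1 hΓΔ
    exact of_insert_of_mem hx (conjL (ih (by gcongr)))
  | conjR _ _ ih₁ ih₂ => exact conjR (ih₁ hΓΔ) (ih₂ hΓΔ)
  | disjL _ _ ih₁ ih₂ =>
    obtain ⟨hx, hΓ⟩ := Finset.insert_subset_iff.1 hΓΔ
    exact of_insert_of_mem hx (disjL (ih₁ (by gcongr)) (ih₂ (by gcongr)))
  | disjR1 _ ih => exact disjR1 (ih hΓΔ)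
  | disjR2 _ ih => exact disjR2 (ih hΓΔ)
  | negnegL _ ih =>
    obtain ⟨hx, hΓ⟩ := Finset.insert_subset_iff.1 hΓΔ
    exact of_insert_of_mem hx (negnegL (ih (by gcongr)))
  | negnegR _ ih => exact negnegR (ih hΓΔ)
  | negimplL _ _ ih₁ ih₂ =>
    obtain ⟨hx, hΓ, hΔ⟩ :=
      (Finset.insert_subset_iff.1 hΓΔ).imp_right Finset.union_subset_iff.1
    exact of_insert_of_mem hx (negimplL' (ih₁ hΓ) (ih₂ (by gcongr)))
  | negimplR _ ih => exact negimplR (ih (by gcongr))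
  | negconjL _ _ ih₁ ih₂ =>
    obtain ⟨hx, hΓ⟩ := Finset.insert_subset_iff.1 hΓΔ
    exact of_insert_of_mem hx (negconjL (ih₁ (by gcongr)) (ih₂ (by gcongr)))
  | negconjR1 _ ih => exact negconjR1 (ih hΓΔ)
  | negconjR2 _ ih => exact negconjR2 (ih hΓΔ)
  | negdisjL _ ih =>
    obtain ⟨hx, hΓ⟩ := Finset.insert_subset_iff.1 hΓΔ
    exact of_insert_of_mem hx (negdisjL (ih (by gcongr)))
  | negdisjR _ _ ih₁ ih₂ => exact negdisjR (ih₁ hΓΔ) (ih₂ hΓΔ)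
  | exMid hr _ _ ih₁ ih₂ => exact exMid hr (ih₁ (by gcongr)) (ih₂ (by gcongr))
  | peirce hr _ ih => exact peirce hr (ih (by gcongr))
  | gem hr _ _ ih₁ ih₂ => exact gem hr (ih₁ (by gcongr)) (ih₂ (by gcongr))
  | atEx hr _ _ ih₁ ih₂ => exact atEx hr (ih₁ (by gcongr)) (ih₂ (by gcongr))

-- Proved jointly because the rules for `neg a` recurse into negated subformulas of `a`.
theorem refl_and_neg_refl (a : Fm) :
    (∀ Γ, SC R (insert a Γ) a) ∧ ∀ Γ, SC R (insert (neg a) Γ) (neg a) := by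
  induction a with
  | var p => exact ⟨init1 p, init2 p⟩
  | conj a b iha ihb =>
    exact ⟨fun Γ => conjL (conjR (iha.1 _) ((ihb.1 Γ).mono (Finset.subset_insert _ _))),
      fun Γ => negconjL (negconjR1 (iha.2 Γ)) (negconjR2 (ihb.2 Γ))⟩
  | disj a b iha ihb =>
    exact ⟨fun Γ => disjL (disjR1 (iha.1 Γ)) (disjR2 (ihb.1 Γ)),
      fun Γ => negdisjL (negdisjR (iha.2 _) ((ihb.2 Γ).mono (Finset.subset_insert _ _)))⟩
  | impl a b iha ihb =>
    refine ⟨fun Γ => implR ?_, fun Γ => negimplR ?_⟩ <;> rw [Finset.insert_comm]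
    · exact implL' (iha.1 Γ) (ihb.1 _)
    · exact negimplL' (iha.1 Γ) (ihb.2 _)
  | neg a iha => exact ⟨iha.2, fun Γ => negnegL (negnegR (iha.1 Γ))⟩

theorem of_mem {Γ : Finset Fm} {a : Fm} (h : a ∈ Γ) : SC R Γ a :=
  of_insert_of_mem h ((refl_and_neg_refl a).1 Γ)

theorem of_NC (hcut : R.cut = true) {Γ : Finset Fm} {β : Fm} (h : NC Γ β) : SC R Γ β := by
  induction h with
  | ass a => exact of_mem (Finset.mem_singleton_self a)
  | impI a _ ih => exact implR (ih.mono (Finset.insert_erase_subset a _))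
  | impE _ _ ih₁ ih₂ => exact cut hcut ih₁ (implL' ih₂ (of_mem (by simp)))
  | conjI _ _ ih₁ ih₂ =>
    exact conjR (ih₁.mono Finset.subset_union_left) (ih₂.mono Finset.subset_union_right)
  | conjE1 _ ih => exact cut' hcut ih (conjL (of_mem (by simp)))
  | conjE2 _ ih => exact cut' hcut ih (conjL (of_mem (by simp)))
  | disjI1 _ ih => exact disjR1 ih
  | disjI2 _ ih => exact disjR2 ih
  | disjE _ _ _ ih₁ ih₂ ih₃ =>
    rw [Finset.union_assoc]
    refine cut hcut ih₁ (disjL (ih₂.mono ?_) (ih₃.mono ?_)) <;>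
      exact (Finset.insert_erase_subset _ _).trans (by gcongr; simp)
  | negnegI _ ih => exact negnegR ih
  | negnegE _ ih => exact cut' hcut ih (negnegL (of_mem (by simp)))
  | negimpI a _ ih => exact negimplR (ih.mono (Finset.insert_erase_subset a _))
  | negimpE _ _ ih₁ ih₂ => exact cut hcut ih₁ (negimplL' ih₂ (of_mem (by simp)))
  | negconjI1 _ ih => exact negconjR1 ih
  | negconjI2 _ ih => exact negconjR2 ih
  | negconjE _ _ _ ih₁ ih₂ ih₃ =>
    rw [Finset.union_assoc]
    refine cut hcut ih₁ (negconjL (ih₂.mono ?_) (ih₃.mono ?_)) <;>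
      exact (Finset.insert_erase_subset _ _).trans (by gcongr; simp)
  | negdisjI _ _ ih₁ ih₂ =>
    exact negdisjR (ih₁.mono Finset.subset_union_left) (ih₂.mono Finset.subset_union_right)
  | negdisjE1 _ ih => exact cut' hcut ih (negdisjL (of_mem (by simp)))
  | negdisjE2 _ ih => exact cut' hcut ih (negdisjL (of_mem (by simp)))

end SC

/-- an nC derivation with open assumptions Γ and end-formula β yields
sC (with cut) provability of Γ ⇒ β. -/
theorem stmt13 (Γ : Finset Fm) (β : Fm) (h : NC Γ β) : SC sC Γ β :=
  SC.of_NC rfl h
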